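/- arXiv:2210.08426 — 4 statements merged into one kernel-verified Lean document; each statement's English description precedes it below -/
import Mathlib

section
/- Define B_n as the number of broken records at time n for an i.i.d. sequence X_0, X_1, ... of Uniform(0,1) random variables, where the current records at time m are the Pareto-optimal pairs (i, X_i) for i ≤ m under the componentwise order, and B_n = |R_{n-1} \ R_n|. Then P[B_n = 1] = 1/4 + O(1/n²); more precisely P[B_n = 1] equals 1/(n(n+1)) plus ∑_{j=1}^{n-1} 1/(j(j+1)(j+2)). -/
open MeasureTheory ProbabilityTheory
open scoped ENNReal

/-- `i` is a current record at time `m`. -/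
def IsCurrentRecord (X : ℕ → Ω → ℝ) (m i : ℕ) (ω : Ω) : Prop :=
  i ≤ m ∧ ∀ j, i < j → j ≤ m → X j ω < X i ω

/-- Number of records broken at time `n`. -/
noncomputable def brokenCount (X : ℕ → Ω → ℝ) (n : ℕ) (ω : Ω) : ℕ :=
  Set.ncard {i | IsCurrentRecord X (n - 1) i ω ∧ ¬ IsCurrentRecord X n i ω}

/-!
At time `m + 1` the broken records are the current records at time `m` whose value is at most
`X (m + 1)`. Since the values of current records decrease along their indices and `m` is always
one of them, exactly one record is broken iff `X m < X (m + 1)` and, when some earlier value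
exceeds `X m`, the last such index `J` has `X (m + 1) < X J`. Setting `p = m - 1 - J` (and
`p = m` when there is no such `J`), these disjoint cases say that the last two positions of the
window `X (m - p), …, X (m + 1)` are records, and that `X J` lies above the whole window. For
i.i.d. atomless values all `n !` orderings of `n` of them are equally likely, and `k !` of them
make every position from `k` on a record; this gives `m ! / (m + 2)!` for the first case and
`p ! / (p + 3)!` for the others.
-/
open Finset
open scoped Nat

section OrderPatterns

variable {α : Type*} [LinearOrder α] {m : ℕ}

def sortedBy (σ : Equiv.Perm (Fin m)) : Set (Fin m → α) := {x | StrictMono (x ∘ σ)}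

def recordsFrom (k : Fin m) : Set (Fin m → α) := {x | ∀ i j, i < j → k ≤ j → x i < x j}

theorem exists_mem_sortedBy {x : Fin m → α} (hx : Function.Injective x) :
    ∃ σ, x ∈ sortedBy σ :=
  ⟨Tuple.sort x, (Tuple.monotone_sort x).strictMono_of_injective (hx.comp (Equiv.injective _))⟩

theorem eq_of_mem_sortedBy {x : Fin m → α} {σ τ : Equiv.Perm (Fin m)}
    (hσ : x ∈ sortedBy σ) (hτ : x ∈ sortedBy τ) : σ = τ := by
  have hx : Function.Injective x := by
    simpa [Function.comp_assoc] using hσ.injective.comp σ.symm.injective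
  have := Tuple.unique_monotone hσ.monotone hτ.monotone
  ext i
  exact congrArg Fin.val (hx (congrFun this i))

theorem card_filter_lt_of_mem_sortedBy {x : Fin m → α} {σ : Equiv.Perm (Fin m)}
    (h : x ∈ sortedBy σ) (l : Fin m) : #{i | x i < x (σ l)} = l := by
  have : ({i | x i < x (σ l)} : Finset (Fin m)) = (Iio l).map σ.toEmbedding := by
    ext i
    obtain ⟨i, rfl⟩ := σ.surjective i
    simpa using h.lt_iff_lt
  rw [this, card_map, Fin.card_Iio]

theorem mem_recordsFrom_iff {x : Fin m → α} {σ : Equiv.Perm (Fin m)} (h : x ∈ sortedBy σ)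
    (k : Fin m) : x ∈ recordsFrom k ↔ ∀ i, k ≤ i → σ i = i := by
  constructor
  · intro hx j hkj
    have hrank : #{i | x i < x j} = j := by
      have : ({i | x i < x j} : Finset (Fin m)) = Iio j := by
        ext i
        simp only [mem_filter, mem_univ, true_and, mem_Iio]
        refine ⟨fun hij => lt_of_not_ge fun hji => ?_, fun hij => hx i j hij hkj⟩
        rcases hji.eq_or_lt with rfl | hji
        · exact hij.false
        · exact (hx j i hji (hkj.trans hji.le)).asymm hij
      rw [this, Fin.card_Iio]
    -- `x j` has rank `j` by `hrank` and rank `σ⁻¹ j` because `x ∘ σ` is sorted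
    have := card_filter_lt_of_mem_sortedBy h (σ.symm j)
    rw [σ.apply_symm_apply, hrank] at this
    exact σ.symm_apply_eq.mp (Fin.ext this.symm) |>.symm
  · intro hσ i j hij hkj
    obtain ⟨i, rfl⟩ := σ.surjective i
    rw [← hσ j hkj] at hij ⊢
    refine h (?_ : i < j)
    by_contra! hji
    rw [hσ i (hkj.trans hji), hσ j hkj] at hij
    exact (hij.trans_le hji).false

theorem card_perm_fixing_ge (k : Fin m) :
    #{σ : Equiv.Perm (Fin m) | ∀ i, k ≤ i → σ i = i} = (k : ℕ)! := by
  rw [← Fintype.card_subtype, ← Fintype.card_congr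
    ((Equiv.Perm.subtypeEquivSubtypePerm (· < k)).trans
      (Equiv.subtypeEquivRight fun σ => by simp only [not_lt])), Fintype.card_perm]
  congr 1
  rw [Fintype.card_subtype, filter_gt_eq_Iio, Fin.card_Iio]

theorem snoc_mem_recordsFrom_iff {z : Fin m → α} {t : α} {k : Fin m} :
    (Fin.snoc z t : Fin (m + 1) → α) ∈ recordsFrom k.castSucc ↔
      z ∈ recordsFrom k ∧ ∀ i, z i < t := by
  constructor
  · intro h
    refine ⟨fun i j hij hkj => ?_, fun i => ?_⟩
    · simpa using h i.castSucc j.castSucc (Fin.castSucc_lt_castSucc_iff.2 hij)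
        (Fin.castSucc_le_castSucc_iff.2 hkj)
    · simpa using h i.castSucc (Fin.last m) (Fin.castSucc_lt_last i) (Fin.castSucc_lt_last k).le
  · rintro ⟨hz, ht⟩ i j hij hkj
    induction j using Fin.lastCases with
    | last =>
      obtain ⟨i, rfl⟩ := Fin.exists_castSucc_eq.2 hij.ne
      simpa using ht i
    | cast j =>
      obtain ⟨i, rfl⟩ := Fin.exists_castSucc_eq.2 (hij.trans (Fin.castSucc_lt_last j)).ne
      simpa using hz i j (Fin.castSucc_lt_castSucc_iff.1 hij)
        (Fin.castSucc_le_castSucc_iff.1 hkj)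

end OrderPatterns

section IID

variable {Ω : Type*} [MeasurableSpace Ω] {μ : Measure Ω} {ν : Measure ℝ} {m : ℕ}
  {Y : Fin m → Ω → ℝ}

theorem measurableSet_sortedBy (σ : Equiv.Perm (Fin m)) :
    MeasurableSet (sortedBy σ : Set (Fin m → ℝ)) := by
  simp only [sortedBy, StrictMono, Set.ofPred_forall]
  exact .iInter fun i => .iInter fun j => .iInter fun _ =>
    measurableSet_lt (measurable_pi_apply _) (measurable_pi_apply _)

theorem ProbabilityTheory.IndepFun.ae_ne [IsFiniteMeasure μ] {X Y : Ω → ℝ} (hX : Measurable X)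
    (hY : Measurable Y) [NullSingletonClass (μ.map Y)] (h : IndepFun X Y μ) :
    ∀ᵐ ω ∂μ, X ω ≠ Y ω := by
  have hdiag : MeasurableSet {p : ℝ × ℝ | p.1 = p.2} := measurableSet_diagonal
  rw [ae_iff]
  push Not
  change μ ((fun ω => (X ω, Y ω)) ⁻¹' {p | p.1 = p.2}) = 0
  rw [← Measure.map_apply (hX.prodMk hY) hdiag,
    (indepFun_iff_map_prod_eq_prod_map_map hX.aemeasurable hY.aemeasurable).mp h,
    Measure.prod_apply hdiag]
  simp

theorem ProbabilityTheory.iIndepFun.ae_injective (hY : ∀ i, Measurable (Y i))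
    (hind : iIndepFun Y μ) (hlaw : ∀ i, μ.map (Y i) = ν) [NullSingletonClass ν] :
    ∀ᵐ ω ∂μ, Function.Injective fun i => Y i ω := by
  have := hind.isProbabilityMeasure
  have hne : ∀ᵐ ω ∂μ, ∀ i j, i ≠ j → Y i ω ≠ Y j ω := by
    simp only [Filter.eventually_all]
    intro i j hij
    have : NullSingletonClass (μ.map (Y j)) := hlaw j ▸ inferInstance
    exact (hind.indepFun hij).ae_ne (hY i) (hY j)
  filter_upwards [hne] with ω h i j hij
  by_contra hne
  exact h i j hne hij

theorem ProbabilityTheory.iIndepFun.map_comp_perm (hY : ∀ i, Measurable (Y i))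
    (hind : iIndepFun Y μ) (hlaw : ∀ i, μ.map (Y i) = ν) (σ : Equiv.Perm (Fin m)) :
    μ.map (fun ω i => Y (σ i) ω) = μ.map (fun ω i => Y i ω) := by
  rw [(hind.precomp σ.injective).map_fun_eq_pi_map fun i => (hY _).aemeasurable,
    hind.map_fun_eq_pi_map fun i => (hY i).aemeasurable]
  congr 1
  funext i
  rw [hlaw, hlaw]

theorem measure_sortedBy_eq_measure_sortedBy_one (hY : ∀ i, Measurable (Y i))
    (hind : iIndepFun Y μ) (hlaw : ∀ i, μ.map (Y i) = ν) (σ : Equiv.Perm (Fin m)) :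
    μ {ω | (fun i => Y i ω) ∈ sortedBy σ} = μ {ω | (fun i => Y i ω) ∈ sortedBy 1} := by
  have hmeas : Measurable fun ω i => Y i ω := measurable_pi_lambda _ hY
  have := congrArg (· (sortedBy 1)) (hind.map_comp_perm hY hlaw σ)
  rwa [Measure.map_apply (measurable_pi_lambda _ fun i => hY (σ i)) (measurableSet_sortedBy 1),
    Measure.map_apply hmeas (measurableSet_sortedBy 1)] at this

theorem measure_exists_mem_sortedBy (hY : ∀ i, Measurable (Y i)) (hind : iIndepFun Y μ)
    (hlaw : ∀ i, μ.map (Y i) = ν) (P : Finset (Equiv.Perm (Fin m))) :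
    μ {ω | ∃ σ ∈ P, (fun i => Y i ω) ∈ sortedBy σ} =
      #P * μ {ω | (fun i => Y i ω) ∈ sortedBy 1} := by
  have hmeas : Measurable fun ω i => Y i ω := measurable_pi_lambda _ hY
  have hunion : {ω | ∃ σ ∈ P, (fun i => Y i ω) ∈ sortedBy σ} =
      ⋃ σ ∈ P, {ω | (fun i => Y i ω) ∈ sortedBy σ} := by
    ext; simp
  rw [hunion, measure_biUnion_finset (f := fun σ => {ω | (fun i => Y i ω) ∈ sortedBy σ})
    (fun σ _ τ _ hστ => Set.disjoint_left.2 fun ω hσ hτ => hστ (eq_of_mem_sortedBy hσ hτ))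
    (fun σ _ => hmeas (measurableSet_sortedBy σ))]
  simp [measure_sortedBy_eq_measure_sortedBy_one hY hind hlaw]

theorem measure_sortedBy [NullSingletonClass ν] (hY : ∀ i, Measurable (Y i))
    (hind : iIndepFun Y μ) (hlaw : ∀ i, μ.map (Y i) = ν) (σ : Equiv.Perm (Fin m)) :
    μ {ω | (fun i => Y i ω) ∈ sortedBy σ} = (m ! : ℝ≥0∞)⁻¹ := by
  have := hind.isProbabilityMeasure
  have htotal := measure_exists_mem_sortedBy hY hind hlaw univ
  rw [card_univ, Fintype.card_perm, Fintype.card_fin,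
    measure_congr (Filter.eventuallyEq_univ.2 ?_), measure_univ] at htotal
  · rw [measure_sortedBy_eq_measure_sortedBy_one hY hind hlaw]
    exact ENNReal.eq_inv_of_mul_eq_one_left (by rw [mul_comm, ← htotal])
  · filter_upwards [hind.ae_injective hY hlaw] with ω hω
    simpa using exists_mem_sortedBy hω

theorem measure_recordsFrom [NullSingletonClass ν] (hY : ∀ i, Measurable (Y i))
    (hind : iIndepFun Y μ) (hlaw : ∀ i, μ.map (Y i) = ν) (k : Fin m) :
    μ {ω | (fun i => Y i ω) ∈ recordsFrom k} = (k : ℕ)! / m ! := by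
  rw [ENNReal.div_eq_inv_mul, mul_comm, ← measure_sortedBy hY hind hlaw 1,
    ← card_perm_fixing_ge k, ← measure_exists_mem_sortedBy hY hind hlaw]
  refine measure_congr (Filter.eventuallyEq_set.2 ?_)
  filter_upwards [hind.ae_injective hY hlaw] with ω hω
  obtain ⟨σ, hσ⟩ := exists_mem_sortedBy hω
  simp only [mem_filter, mem_univ, true_and, mem_recordsFrom_iff hσ]
  exact ⟨fun h => ⟨σ, h, hσ⟩, fun ⟨τ, hτ, hτσ⟩ => eq_of_mem_sortedBy hσ hτσ ▸ hτ⟩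

end IID

section BrokenRecords

variable {Ω : Type*} {X : ℕ → Ω → ℝ} {ω : Ω} {m : ℕ}

theorem isCurrentRecord_self : IsCurrentRecord X m m ω :=
  ⟨le_rfl, fun _ hj hjm => absurd (hj.trans_le hjm) (lt_irrefl _)⟩

theorem isCurrentRecord_succ_iff {i : ℕ} (hi : i ≤ m) :
    IsCurrentRecord X (m + 1) i ω ↔ IsCurrentRecord X m i ω ∧ X (m + 1) ω < X i ω := by
  constructor
  · rintro ⟨-, h⟩
    exact ⟨⟨hi, fun j hij hjm => h j hij (by omega)⟩, h (m + 1) (by omega) le_rfl⟩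
  · rintro ⟨⟨-, h⟩, hlt⟩
    refine ⟨by omega, fun j hij hjm => ?_⟩
    rcases hjm.lt_or_eq with hjm | rfl
    · exact h j hij (by omega)
    · exact hlt

theorem brokenCount_succ_eq_one_iff_of_ne (hne : X m ω ≠ X (m + 1) ω) :
    brokenCount X (m + 1) ω = 1 ↔
      X m ω < X (m + 1) ω ∧ ∀ i < m, IsCurrentRecord X m i ω → X (m + 1) ω < X i ω := by
  have hbroken : {i | IsCurrentRecord X (m + 1 - 1) i ω ∧ ¬ IsCurrentRecord X (m + 1) i ω} =
      {i | IsCurrentRecord X m i ω ∧ X i ω ≤ X (m + 1) ω} := by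
    ext i
    simp only [Nat.add_sub_cancel, Set.mem_ofPred_eq]
    exact and_congr_right fun h => by rw [isCurrentRecord_succ_iff h.1]; simp [h]
  rw [brokenCount, hbroken, Set.ncard_eq_one]
  constructor
  · rintro ⟨a, ha⟩
    have hmem (i : ℕ) : IsCurrentRecord X m i ω ∧ X i ω ≤ X (m + 1) ω ↔ i = a :=
      Set.ext_iff.1 ha i
    obtain ⟨⟨ham, harec⟩, hale⟩ := (hmem a).2 rfl
    have hlt : X m ω < X (m + 1) ω := by
      refine lt_of_le_of_ne ?_ hne
      rcases ham.lt_or_eq with h | rfl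
      · exact (harec m h le_rfl).le.trans hale
      · exact hale
    have hma : m = a := (hmem m).1 ⟨isCurrentRecord_self, hlt.le⟩
    refine ⟨hlt, fun i hi hrec => lt_of_not_ge fun hle => ?_⟩
    have := (hmem i).1 ⟨hrec, hle⟩
    omega
  · rintro ⟨hlt, h⟩
    refine ⟨m, Set.eq_singleton_iff_unique_mem.2 ⟨⟨isCurrentRecord_self, hlt.le⟩, ?_⟩⟩
    rintro i ⟨hrec, hle⟩
    by_contra him
    exact (h i (lt_of_le_of_ne hrec.1 him) hrec).not_ge hle

/-- Here `m - 1 - p` is the last index before `m` whose value exceeds `X m`. -/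
theorem brokenCount_succ_eq_one_iff (hinj : Function.Injective fun i : Fin (m + 2) => X i ω) :
    brokenCount X (m + 1) ω = 1 ↔
      ((∀ i < m, X i ω < X m ω) ∧ X m ω < X (m + 1) ω) ∨
      ∃ p < m, ((∀ i, m - p ≤ i → i < m → X i ω < X m ω) ∧ X m ω < X (m + 1) ω) ∧
        X (m + 1) ω < X (m - 1 - p) ω := by
  have hne {i j : ℕ} (hi : i ≤ m + 1) (hj : j ≤ m + 1) (hij : i ≠ j) : X i ω ≠ X j ω :=
    fun h => hij (congrArg Fin.val (@hinj ⟨i, by omega⟩ ⟨j, by omega⟩ h))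
  rw [brokenCount_succ_eq_one_iff_of_ne (hne (by omega) le_rfl (by omega))]
  constructor
  · rintro ⟨hlt, hrec⟩
    by_cases hA : ∀ i < m, X i ω < X m ω
    · exact Or.inl ⟨hA, hlt⟩
    push Not at hA
    obtain ⟨i₀, hi₀, hle⟩ := hA
    let P i := i < m ∧ X m ω < X i ω
    let J := Nat.findGreatest P m
    obtain ⟨hJm, hJ⟩ : P J :=
      Nat.findGreatest_spec (m := i₀) hi₀.le
        ⟨hi₀, lt_of_le_of_ne hle (hne (by omega) (by omega) (by omega))⟩
    have hbelow (i : ℕ) (hJi : J < i) (him : i < m) : X i ω < X m ω :=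
      lt_of_le_of_ne (not_lt.1 fun h => Nat.findGreatest_is_greatest hJi him.le ⟨him, h⟩)
        (hne (by omega) (by omega) (by omega))
    have hJrec : IsCurrentRecord X m J ω := by
      refine ⟨hJm.le, fun j hJj hjm => ?_⟩
      rcases hjm.lt_or_eq with hjm | rfl
      · exact (hbelow j hJj hjm).trans hJ
      · exact hJ
    refine Or.inr ⟨m - 1 - J, by omega, ⟨fun i hi him => hbelow i (by omega) him, hlt⟩, ?_⟩
    rw [show m - 1 - (m - 1 - J) = J by omega]
    exact hrec J hJm hJrec
  · rintro (⟨hA, hlt⟩ | ⟨p, hpm, ⟨hbelow, hlt⟩, hJ⟩)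
    · exact ⟨hlt, fun i hi hrec => absurd (hrec.2 m hi le_rfl) (hA i hi).asymm⟩
    refine ⟨hlt, fun i hi hrec => ?_⟩
    rcases lt_trichotomy i (m - 1 - p) with hiJ | rfl | hiJ
    · exact hJ.trans (hrec.2 _ hiJ (by omega))
    · exact hJ
    · exact absurd (hrec.2 m hi le_rfl) (hbelow i (by omega) hi).asymm

end BrokenRecords

section BrokenRecordsIID

variable {Ω : Type*} {X : ℕ → Ω → ℝ} {m p : ℕ}

theorem window_mem_recordsFrom_iff {ω : Ω} (hp : p ≤ m) :
    (fun i : Fin (p + 2) => X (m - p + i) ω) ∈ recordsFrom (Fin.last p).castSucc ↔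
      (∀ i, m - p ≤ i → i < m → X i ω < X m ω) ∧ X m ω < X (m + 1) ω := by
  simp only [recordsFrom, Set.mem_ofPred_eq, Fin.forall_iff, Fin.mk_lt_mk, Fin.le_def,
    Fin.val_castSucc, Fin.val_last]
  constructor
  · intro h
    refine ⟨fun i hi him => ?_, ?_⟩
    · have := h (i - (m - p)) (by omega) p (by omega) (by omega) le_rfl
      rwa [show m - p + (i - (m - p)) = i by omega, show m - p + p = m by omega] at this
    · have := h p (by omega) (p + 1) (by omega) (by omega) (by omega)
      rwa [show m - p + p = m by omega, show m - p + (p + 1) = m + 1 by omega] at this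
  · rintro ⟨hbelow, hlt⟩ i hi j hj hij hpj
    obtain rfl | rfl : j = p ∨ j = p + 1 := by omega
    · rw [show m - j + j = m by omega]
      exact hbelow _ (by omega) (by omega)
    · rw [show m - p + (p + 1) = m + 1 by omega]
      refine lt_of_le_of_lt ?_ hlt
      rcases (show i ≤ p by omega).lt_or_eq with hip | rfl
      · exact (hbelow _ (by omega) (by omega)).le
      · exact (congrArg (X · ω) (by omega : m - i + i = m)).le

variable [MeasurableSpace Ω] {μ : Measure Ω} {ν : Measure ℝ} [NullSingletonClass ν]

theorem measure_window_lastTwoRecords (hX : ∀ i, Measurable (X i)) (hind : iIndepFun X μ)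
    (hlaw : ∀ i, μ.map (X i) = ν) (hp : p ≤ m) :
    μ {ω | (∀ i, m - p ≤ i → i < m → X i ω < X m ω) ∧ X m ω < X (m + 1) ω} =
      p ! / (p + 2)! := by
  have hr : Function.Injective fun i : Fin (p + 2) => m - p + (i : ℕ) :=
    fun i j h => Fin.ext (by simpa using h)
  have := measure_recordsFrom (fun _ => hX _) (hind.precomp hr) (fun _ => hlaw _)
    (Fin.last p).castSucc
  simp_rw [window_mem_recordsFrom_iff hp] at this
  simpa using this

theorem measure_window_lastTwoRecords_lt (hX : ∀ i, Measurable (X i)) (hind : iIndepFun X μ)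
    (hlaw : ∀ i, μ.map (X i) = ν) (hp : p < m) :
    μ {ω | ((∀ i, m - p ≤ i → i < m → X i ω < X m ω) ∧ X m ω < X (m + 1) ω) ∧
      X (m + 1) ω < X (m - 1 - p) ω} = p ! / (p + 3)! := by
  let r : Fin (p + 3) → ℕ := Fin.snoc (fun i : Fin (p + 2) => m - p + (i : ℕ)) (m - 1 - p)
  have hr : Function.Injective r := by
    refine Fin.snoc_injective_iff.2 ⟨fun i j h => Fin.ext (by simpa using h), ?_⟩
    rintro ⟨i, hi⟩
    simp only at hi
    omega
  have := measure_recordsFrom (fun _ => hX _) (hind.precomp hr) (fun _ => hlaw _)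
    (Fin.last p).castSucc.castSucc
  have hlast : m - p + (p + 1) = m + 1 := by omega
  convert this using 1
  · congr 1
    ext ω
    rw [Set.mem_ofPred_eq, Set.mem_ofPred_eq, show (fun i => X (r i) ω) =
      Fin.snoc (fun i : Fin (p + 2) => X (m - p + i) ω) (X (m - 1 - p) ω)
      from Fin.comp_snoc (X · ω) _ _, snoc_mem_recordsFrom_iff,
      ← window_mem_recordsFrom_iff hp.le]
    refine and_congr_right fun hy =>
      ⟨fun hJ i => ?_, fun hJ => by simpa [hlast] using hJ (Fin.last _)⟩
    rcases (Fin.le_last i).lt_or_eq with hi | rfl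
    · exact (hy i (Fin.last _) hi (Fin.castSucc_lt_last _).le).trans (by simpa [hlast] using hJ)
    · simpa [hlast] using hJ
  · simp

theorem measure_brokenCount_succ_eq_one (hX : ∀ i, Measurable (X i)) (hind : iIndepFun X μ)
    (hlaw : ∀ i, μ.map (X i) = ν) :
    μ {ω | brokenCount X (m + 1) ω = 1} =
      m ! / (m + 2)! + ∑ p ∈ range m, (p ! / (p + 3)! : ℝ≥0∞) := by
  set A : Set Ω := {ω | (∀ i < m, X i ω < X m ω) ∧ X m ω < X (m + 1) ω}
  set E : ℕ → Set Ω := fun p => {ω | ((∀ i, m - p ≤ i → i < m → X i ω < X m ω) ∧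
    X m ω < X (m + 1) ω) ∧ X (m + 1) ω < X (m - 1 - p) ω}
  have hae :
      {ω | brokenCount X (m + 1) ω = 1} =ᵐ[μ] (A ∪ ⋃ p ∈ range m, E p : Set Ω) := by
    refine Filter.eventuallyEq_set.2 ?_
    filter_upwards [(hind.precomp (Fin.val_injective (n := m + 2))).ae_injective
      (fun _ => hX _) (fun _ => hlaw _)] with ω hω
    rw [brokenCount_succ_eq_one_iff hω]
    simp only [A, E, Set.mem_union, Set.mem_iUnion, mem_range, exists_prop, Set.mem_ofPred_eq]
  have hE_disj {p q : ℕ} (hpq : p < q) (hq : q < m) : Disjoint (E p) (E q) :=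
    Set.disjoint_left.2 fun _ ⟨⟨_, hlt⟩, hJ⟩ ⟨⟨hbelow, _⟩, _⟩ =>
      (hbelow (m - 1 - p) (by omega) (by omega)).asymm (hlt.trans hJ)
  have hAE_disj : Disjoint A (⋃ p ∈ range m, E p) := by
    simp only [Set.disjoint_iUnion_right, mem_range]
    exact fun p hp => Set.disjoint_left.2 fun _ ⟨hA, _⟩ ⟨⟨_, hlt⟩, hJ⟩ =>
      (hA (m - 1 - p) (by omega)).asymm (hlt.trans hJ)
  rw [measure_congr hae, measure_union hAE_disj (by measurability),
    measure_biUnion_finset (fun p hp q hq hpq => (lt_or_gt_of_ne hpq).elim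
      (fun h => hE_disj h (mem_range.1 hq)) (fun h => (hE_disj h (mem_range.1 hp)).symm))
      (fun p _ => by measurability)]
  congr 1
  · simpa using measure_window_lastTwoRecords hX hind hlaw le_rfl
  · exact sum_congr rfl fun p hp =>
      measure_window_lastTwoRecords_lt hX hind hlaw (mem_range.1 hp)

end BrokenRecordsIID

theorem factorial_div_factorial_add (p k : ℕ) :
    (p ! / (p + k)! : ℝ≥0∞) = ENNReal.ofReal (1 / (p + 1).ascFactorial k) := by
  rw [← Nat.factorial_mul_ascFactorial, ← ENNReal.ofReal_natCast, ← ENNReal.ofReal_natCast,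
    ← ENNReal.ofReal_div_of_pos (by positivity)]
  congr 1
  push_cast
  field_simp

theorem stmt_7_general {Ω : Type*} [MeasurableSpace Ω] (μ : Measure Ω)
    (X : ℕ → Ω → ℝ) (hmeas : ∀ i, Measurable (X i))
    (hindep : iIndepFun X μ)
    (hunif : ∀ i, μ.map (X i) = volume.restrict (Set.Icc (0:ℝ) 1))
    (n : ℕ) (hn : 2 ≤ n) :
    μ {ω | brokenCount X n ω = 1} =
      ENNReal.ofReal (1 / ((n : ℝ) * (n + 1)) +
        ∑ j ∈ Finset.Icc 1 (n - 1), (1 : ℝ) / (j * (j + 1) * (j + 2))) := by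
  obtain ⟨m, rfl⟩ : ∃ m, n = m + 1 := ⟨n - 1, by omega⟩
  rw [measure_brokenCount_succ_eq_one hmeas hindep hunif, factorial_div_factorial_add,
    sum_congr rfl fun p _ => factorial_div_factorial_add p 3,
    ← ENNReal.ofReal_sum_of_nonneg fun p _ => by positivity,
    ← ENNReal.ofReal_add (by positivity) (sum_nonneg fun p _ => by positivity),
    Nat.add_sub_cancel, ← Ico_add_one_right_eq_Icc, sum_Ico_eq_sum_range, Nat.add_sub_cancel]
  simp only [Nat.ascFactorial_succ, Nat.ascFactorial_zero]
  push_cast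
  ring_nf

theorem stmt_7 {Ω : Type*} [MeasurableSpace Ω] (μ : Measure Ω) [IsProbabilityMeasure μ]
    (X : ℕ → Ω → ℝ) (hmeas : ∀ i, Measurable (X i))
    (hindep : iIndepFun X μ)
    (hunif : ∀ i, μ.map (X i) = volume.restrict (Set.Icc (0:ℝ) 1))
    (n : ℕ) (hn : 2 ≤ n) :
    μ {ω | brokenCount X n ω = 1} =
      ENNReal.ofReal (1 / ((n : ℝ) * (n + 1)) +
        ∑ j ∈ Finset.Icc 1 (n - 1), (1 : ℝ) / (j * (j + 1) * (j + 2))) :=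
  stmt_7_general μ X hmeas hindep hunif n hn
end

section
/- Fix k ≥ 1 and indices i_k < i_{k-1} < ... < i_1 < i_0 = n-1 with n ≥ k+1. For i.i.d. Uniform(0,1) variables X_0,...,X_n, the probability of the event that X_{i_k} > X_{i_{k-1}} > ... > X_{i_0}, that X_j < X_{i_{p-1}} for all p = 1,...,k and i_p < j < i_{p-1}, and that X_{i_{k-1}} < X_n < X_{i_k}, equals (∏_{p=1}^{k-1} 1/(i_0 - i_p)) · 1/((i_0-i_k)(i_0-i_k+1)(i_0-i_k+2)). -/
/-
Put `N p = i 0 - i p`. Read leftwards from `i 0`, the event says that the running maxima of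
`X` on `(i k, i 0]` are attained exactly at `i 0, …, i (k - 1)`, that they stay below `X n`, and that
`X n < X (i k)`. Let `R p c` be the probability that the first `p` maxima are as prescribed and
everything on `(i p, i 0]` is below `c`. Conditioning on the value `t < c` of the next maximum
`X (i p)`, the event splits into the same event for `p` and threshold `t`, and the independent event
that the `i p - i (p + 1) - 1` values strictly between `i (p + 1)` and `i p` lie below `t`; hence
`R (p + 1) c = ∫₀ᶜ R p t · t ^ (i p - i (p + 1) - 1) dt` and `R p c = c ^ N p / (N 1 ⋯ N p)`.
Conditioning on `X (i k)` and then on `X n` integrates `R k` twice more, which produces the factor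
`1 / ((N k + 1) (N k + 2))`.
-/

open MeasureTheory ProbabilityTheory
open scoped ENNReal

open Function Set

lemma DependsOn.apply_update_of_notMem {ι β : Type*} {α : ι → Type*} [DecidableEq ι]
    {f : (Π j, α j) → β} {s : Set ι} (hf : DependsOn f s) {a : ι} (ha : a ∉ s) (x : Π j, α j)
    (y : α a) : f (Function.update x a y) = f x :=
  hf fun _ hj => update_of_ne (ne_of_mem_of_not_mem hj ha) _ _

lemma dependsOn_forall_mem {ι α : Type*} (s : Set ι) (P : ι → α → Prop) :
    DependsOn (fun v : ι → α => ∀ j ∈ s, P j (v j)) s :=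
  fun _ _ h => propext (forall₂_congr fun j hj => by rw [h j hj])

lemma Iio_inter_Icc_of_le {α : Type*} [LinearOrder α] {a b t : α} (ht : t ≤ b) :
    Iio t ∩ Icc a b = Ico a t := by
  ext x
  simp only [mem_inter_iff, mem_Iio, mem_Icc, mem_Ico]
  exact ⟨fun h => ⟨h.2.1, h.1⟩, fun h => ⟨h.2, h.1, h.2.le.trans ht⟩⟩

lemma setLIntegral_Ico_pow (e : ℕ) {c : ℝ} (hc : 0 ≤ c) :
    ∫⁻ t in Ico 0 c, ENNReal.ofReal (t ^ e) = ENNReal.ofReal (c ^ (e + 1)) / (e + 1 : ℕ) := by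
  rw [setLIntegral_congr Ico_ae_eq_Ioc, ← ofReal_integral_eq_lintegral_ofReal
    ((continuous_pow e).integrableOn_Icc.mono_set Ioc_subset_Icc_self)
    ((ae_restrict_iff' measurableSet_Ioc).mpr (ae_of_all _ fun t ht => pow_nonneg ht.1.le e)),
    ← intervalIntegral.integral_of_le hc, integral_pow, ENNReal.ofReal_div_of_pos (by positivity),
    ← Nat.cast_succ, ENNReal.ofReal_natCast]
  simp

lemma measure_lt_of_map_eq_uniform {Ω : Type*} [MeasurableSpace Ω] {μ : Measure Ω} {Y : Ω → ℝ}
    (hY : Measurable Y) (hunif : μ.map Y = volume.restrict (Icc 0 1)) {t : ℝ} (ht : t ∈ Icc 0 1) :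
    μ (Y ⁻¹' Iio t) = ENNReal.ofReal t := by
  rw [← Measure.map_apply hY measurableSet_Iio, hunif,
    Measure.restrict_apply measurableSet_Iio,
    Iio_inter_Icc_of_le ht.2, Real.volume_Ico, sub_zero]

namespace ProbabilityTheory

section coordinates

variable {Ω ι β : Type*} [mβ : MeasurableSpace β] {X : ι → Ω → β}

lemma measurable_piecewise_zero_iSup_comap [Zero β] (S : Set ι) [DecidablePred (· ∈ S)] :
    Measurable[⨆ j ∈ S, MeasurableSpace.comap (X j) mβ]
      fun ω => S.piecewise (fun j => X j ω) 0 := by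
  refine @measurable_pi_lambda _ _ _ (_) _ _ fun j => ?_
  by_cases hj : j ∈ S
  · simpa only [piecewise_eq_of_mem _ _ _ hj] using (comap_measurable (X j)).mono
      (le_iSup₂ (f := fun j (_ : j ∈ S) => MeasurableSpace.comap (X j) mβ) j hj) le_rfl
  · simpa only [piecewise_eq_of_notMem _ _ _ hj] using measurable_const

lemma measurableSet_iSup_comap_of_dependsOn [Zero β] {S : Set ι} {Q : Set (ι → β)}
    (hQ : MeasurableSet Q) (hQS : DependsOn (· ∈ Q) S) :
    MeasurableSet[⨆ j ∈ S, MeasurableSpace.comap (X j) mβ] {ω | (fun j => X j ω) ∈ Q} := by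
  classical
  have h : {ω | (fun j => X j ω) ∈ Q} = (fun ω => S.piecewise (fun j => X j ω) 0) ⁻¹' Q :=
    ext fun ω => (hQS fun j hj => (piecewise_eq_of_mem _ _ _ hj).symm).to_iff
  rw [h]
  exact measurable_piecewise_zero_iSup_comap S hQ

variable [MeasurableSpace Ω] {μ : Measure Ω}

lemma iIndepFun.indep_iSup_comap (hmeas : ∀ j, Measurable (X j)) (hindep : iIndepFun X μ)
    {S T : Set ι} (hST : Disjoint S T) :
    Indep (⨆ j ∈ S, MeasurableSpace.comap (X j) mβ) (⨆ j ∈ T, MeasurableSpace.comap (X j) mβ) μ :=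
  indep_iSup_of_disjoint (fun j => (hmeas j).comap_le) hindep.iIndep hST

lemma iIndepFun.measure_inter_eq_mul_of_dependsOn [Zero β] (hmeas : ∀ j, Measurable (X j))
    (hindep : iIndepFun X μ) {S T : Set ι} (hST : Disjoint S T) {Q R : Set (ι → β)}
    (hQ : MeasurableSet Q) (hR : MeasurableSet R) (hQS : DependsOn (· ∈ Q) S)
    (hRT : DependsOn (· ∈ R) T) :
    μ {ω | (fun j => X j ω) ∈ Q ∩ R} =
      μ {ω | (fun j => X j ω) ∈ Q} * μ {ω | (fun j => X j ω) ∈ R} :=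
  (Indep_iff _ _ μ).mp (hindep.indep_iSup_comap hmeas hST) _ _
    (measurableSet_iSup_comap_of_dependsOn hQ hQS) (measurableSet_iSup_comap_of_dependsOn hR hRT)

lemma iIndepFun.measure_eq_lintegral_update [Zero β] [DecidableEq ι]
    (hmeas : ∀ j, Measurable (X j)) (hindep : iIndepFun X μ) (a : ι) {Q : Set (ι → β)}
    (hQ : MeasurableSet Q) :
    μ {ω | (fun j => X j ω) ∈ Q} =
      ∫⁻ t, μ {ω | update (fun j => X j ω) a t ∈ Q} ∂(μ.map (X a)) := by
  have := hindep.isProbabilityMeasure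
  -- `W` forgets the coordinate `a`, so it is independent of `X a`, and `X = update W a (X a)`.
  set W : Ω → ι → β := fun ω => ({a}ᶜ : Set ι).piecewise (fun j => X j ω) 0
  have hW : Measurable[⨆ j ∈ ({a}ᶜ : Set ι), MeasurableSpace.comap (X j) mβ] W :=
    measurable_piecewise_zero_iSup_comap _
  have hW' : Measurable W := hW.mono (iSup₂_le fun j _ => (hmeas j).comap_le) le_rfl
  have hindepW : IndepFun (X a) W μ := by
    rw [IndepFun_iff_Indep]
    refine indep_of_indep_of_le_right (indep_of_indep_of_le_left
      (hindep.indep_iSup_comap hmeas (disjoint_compl_right (a := ({a} : Set ι)))) ?_) hW.comap_le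
    exact le_iSup₂ (f := fun j (_ : j ∈ ({a} : Set ι)) => MeasurableSpace.comap (X j) mβ) a rfl
  have hupdate : ∀ ω t, update (fun j => X j ω) a t = update (W ω) a t := fun ω t => by
    ext j
    by_cases hj : j = a
    · subst hj; simp
    · simp [W, hj]
  have hX : ∀ ω, (fun j => X j ω) = update (W ω) a (X a ω) := fun ω => by
    rw [← hupdate, update_eq_self]
  have hC : MeasurableSet ((fun x : β × (ι → β) => update x.2 a x.1) ⁻¹' Q) :=
    (measurable_update'.comp measurable_swap) hQ
  calc μ {ω | (fun j => X j ω) ∈ Q}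
      = μ.map (fun ω => (X a ω, W ω)) ((fun x : β × (ι → β) => update x.2 a x.1) ⁻¹' Q) := by
        rw [Measure.map_apply ((hmeas a).prodMk hW') hC]
        simp only [preimage_preimage, ← hX]
        rfl
    _ = ∫⁻ t, μ.map W {w | update w a t ∈ Q} ∂(μ.map (X a)) := by
        rw [(indepFun_iff_map_prod_eq_prod_map_map (hmeas a).aemeasurable hW'.aemeasurable).mp
          hindepW, Measure.prod_apply hC]
        rfl
    _ = ∫⁻ t, μ {ω | update (fun j => X j ω) a t ∈ Q} ∂(μ.map (X a)) := by
        refine lintegral_congr fun t => ?_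
        rw [Measure.map_apply hW' (s := {w | update w a t ∈ Q}) (measurable_update_left hQ)]
        simp only [hupdate]
        rfl

end coordinates

section uniform

variable {Ω ι : Type*} [MeasurableSpace Ω] {μ : Measure Ω} {X : ι → Ω → ℝ}

lemma iIndepFun.measure_forall_lt (hmeas : ∀ j, Measurable (X j)) (hindep : iIndepFun X μ)
    (hunif : ∀ j, μ.map (X j) = volume.restrict (Icc 0 1)) (s : Finset ι) {t : ℝ}
    (ht : t ∈ Icc 0 1) :
    μ {ω | (fun j => X j ω) ∈ {w : ι → ℝ | ∀ j ∈ s, w j < t}} = ENNReal.ofReal t ^ s.card := by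
  rw [show {ω | (fun j => X j ω) ∈ {w : ι → ℝ | ∀ j ∈ s, w j < t}} = ⋂ j ∈ s, X j ⁻¹' Iio t by
      ext; simp,
    hindep.measure_inter_preimage_eq_mul s fun _ _ => measurableSet_Iio,
    Finset.prod_congr rfl fun j _ => measure_lt_of_map_eq_uniform (hmeas j) (hunif j) ht,
    Finset.prod_const]

lemma iIndepFun.measure_eq_of_update_eq_pow [DecidableEq ι] (hmeas : ∀ j, Measurable (X j))
    (hindep : iIndepFun X μ) (hunif : ∀ j, μ.map (X j) = volume.restrict (Icc 0 1))
    {a : ι} {Q : Set (ι → ℝ)} (hQ : MeasurableSet Q) {c : ℝ} (hc : c ∈ Icc 0 1)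
    (hQa : ∀ v ∈ Q, v a < c) {K : ℝ≥0∞} {e : ℕ}
    (hcond : ∀ t ∈ Ico 0 c, μ {ω | update (fun j => X j ω) a t ∈ Q} = K * ENNReal.ofReal (t ^ e)) :
    μ {ω | (fun j => X j ω) ∈ Q} = K * ENNReal.ofReal (c ^ (e + 1)) / (e + 1 : ℕ) := by
  have hcond' : EqOn (fun t => μ {ω | update (fun j => X j ω) a t ∈ Q})
      ((Iio c).indicator fun t => K * ENNReal.ofReal (t ^ e)) (Icc 0 1) := fun t ht => by
    by_cases htc : t < c
    · rw [indicator_of_mem (mem_Iio.mpr htc), ← hcond t ⟨ht.1, htc⟩]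
    · have hempty : {ω | update (fun j => X j ω) a t ∈ Q} = ∅ :=
        eq_empty_of_forall_notMem fun ω hω => htc (by simpa using hQa _ hω)
      rw [indicator_of_notMem (notMem_Iio.mpr (not_lt.mp htc))]
      exact (congrArg μ hempty).trans measure_empty
  rw [hindep.measure_eq_lintegral_update hmeas a hQ, hunif, setLIntegral_congr_fun measurableSet_Icc
    hcond', lintegral_indicator measurableSet_Iio, Measure.restrict_restrict measurableSet_Iio,
    Iio_inter_Icc_of_le hc.2, lintegral_const_mul _ (by fun_prop),
    setLIntegral_Ico_pow e hc.1, mul_div_assoc]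

end uniform

end ProbabilityTheory

/-- Read leftwards from `i 0`, the running maxima of `v` on `(i p, i 0]` are attained exactly at
`i 0, …, i (p - 1)`, and they stay below `c`. -/
def recordSet (i : ℕ → ℕ) (p : ℕ) (c : ℝ) : Set (ℕ → ℝ) :=
  {v | (∀ q < p, ∀ j, i (q + 1) < j → j ≤ i 0 → j ≠ i q → v j < v (i q)) ∧
    ∀ j, i p < j → j ≤ i 0 → v j < c}

section recordSet

variable {i : ℕ → ℕ} {k p : ℕ} {c : ℝ}

@[simp] lemma recordSet_zero (i : ℕ → ℕ) (c : ℝ) : recordSet i 0 c = univ := by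
  ext v
  simp only [recordSet, mem_ofPred_eq, mem_univ, iff_true]
  exact ⟨fun q hq => absurd hq q.not_lt_zero, fun j h1 h2 => absurd h1 h2.not_gt⟩

lemma measurableSet_recordSet (i : ℕ → ℕ) (p : ℕ) (c : ℝ) : MeasurableSet (recordSet i p c) := by
  unfold recordSet; measurability

lemma dependsOn_recordSet (hi : StrictAntiOn i (Iic k)) (hp : p ≤ k) :
    DependsOn (· ∈ recordSet i p c) (Ioc (i p) (i 0)) := by
  have hanti : AntitoneOn i (Iic k) := hi.antitoneOn
  suffices h : ∀ v w : ℕ → ℝ, (∀ j ∈ Ioc (i p) (i 0), v j = w j) →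
      v ∈ recordSet i p c → w ∈ recordSet i p c from
    fun v w hvw => propext ⟨h v w hvw, h w v fun j hj => (hvw j hj).symm⟩
  rintro v w hvw ⟨hchain, hbelow⟩
  have hmem : ∀ q < p, i q ∈ Ioc (i p) (i 0) := fun q hq =>
    ⟨hi (mem_Iic.2 (by omega)) (mem_Iic.2 (by omega)) hq,
      hanti (by simp) (mem_Iic.2 (by omega)) (Nat.zero_le q)⟩
  refine ⟨fun q hq j hj1 hj2 hjq => ?_, fun j hj1 hj2 => ?_⟩
  · have hj : j ∈ Ioc (i p) (i 0) :=
      ⟨lt_of_le_of_lt (hanti (mem_Iic.2 (by omega)) (mem_Iic.2 (by omega)) (by omega)) hj1, hj2⟩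
    rw [← hvw j hj, ← hvw _ (hmem q hq)]
    exact hchain q hq j hj1 hj2 hjq
  · rw [← hvw j ⟨hj1, hj2⟩]
    exact hbelow j hj1 hj2

lemma mem_recordSet_succ_iff (hi : StrictAntiOn i (Iic k)) (hp : p < k) {v : ℕ → ℝ} :
    v ∈ recordSet i (p + 1) c ↔ v (i p) < c ∧ v ∈ recordSet i p (v (i p)) ∧
      ∀ j ∈ Finset.Ioo (i (p + 1)) (i p), v j < v (i p) := by
  have hstep : i (p + 1) < i p := hi (mem_Iic.2 (by omega)) (mem_Iic.2 (by omega)) (by omega)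
  have htop : i p ≤ i 0 := hi.antitoneOn (by simp) (mem_Iic.2 (by omega)) (Nat.zero_le p)
  simp only [recordSet, mem_ofPred_eq, Finset.mem_Ioo]
  constructor
  · rintro ⟨hchain, hbelow⟩
    exact ⟨hbelow _ hstep htop, ⟨fun q hq => hchain q (by omega),
      fun j hj1 hj2 => hchain p (by omega) j (by omega) hj2 (by omega)⟩,
      fun j ⟨hj1, hj2⟩ => hchain p (by omega) j hj1 (by omega) (by omega)⟩
  · rintro ⟨hc, ⟨hchain, hbelow⟩, hblock⟩
    have hp' : ∀ j, i (p + 1) < j → j ≤ i 0 → j ≠ i p → v j < v (i p) := fun j hj1 hj2 hjp =>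
      (lt_or_gt_of_ne hjp).elim (fun h => hblock j ⟨hj1, h⟩) (fun h => hbelow j h hj2)
    refine ⟨fun q hq => ?_, fun j hj1 hj2 => ?_⟩
    · rcases Nat.lt_succ_iff_lt_or_eq.mp hq with hq | rfl
      · exact hchain q hq
      · exact hp'
    · rcases eq_or_ne j (i p) with rfl | hjp
      · exact hc
      · exact (hp' j hj1 hj2 hjp).trans hc

lemma mem_recordSet_iff (hi : StrictAntiOn i (Iic k)) (hp1 : 1 ≤ p) (hpk : p ≤ k) {v : ℕ → ℝ} :
    v ∈ recordSet i p c ↔ (∀ q, q + 1 < p → v (i q) < v (i (q + 1))) ∧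
      (∀ q, 1 ≤ q → q ≤ p → ∀ j, i q < j → j < i (q - 1) → v j < v (i (q - 1))) ∧
      v (i (p - 1)) < c := by
  induction p, hp1 using Nat.le_induction generalizing c with
  | base =>
    rw [mem_recordSet_succ_iff hi hpk, recordSet_zero]
    simp only [Finset.mem_Ioo, mem_univ, true_and]
    constructor
    · rintro ⟨hc, hblock⟩
      refine ⟨fun q hq => by omega, fun q hq1 hq2 j hj1 hj2 => ?_, hc⟩
      obtain rfl : q = 1 := by omega
      exact hblock j ⟨hj1, hj2⟩
    · rintro ⟨-, hblock, hc⟩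
      exact ⟨hc, fun j hj => hblock 1 le_rfl le_rfl j hj.1 hj.2⟩
  | succ p hp1 ih =>
    rw [mem_recordSet_succ_iff hi (by omega), ih (by omega)]
    simp only [Finset.mem_Ioo, Nat.add_sub_cancel]
    constructor
    · rintro ⟨hc, ⟨hchain, hblocks, hlast⟩, hblock⟩
      refine ⟨fun q hq => ?_, fun q hq1 hq2 j hj1 hj2 => ?_, hc⟩
      · rcases lt_or_eq_of_le (Nat.le_of_lt_succ hq) with hq | rfl
        · exact hchain q hq
        · simpa only [Nat.add_sub_cancel] using hlast
      · rcases lt_or_eq_of_le hq2 with hq2 | rfl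
        · exact hblocks q hq1 (by omega) j hj1 hj2
        · exact hblock j ⟨hj1, hj2⟩
    · rintro ⟨hchain, hblocks, hc⟩
      refine ⟨hc, ⟨fun q hq => hchain q (by omega),
        fun q hq1 hq2 => hblocks q hq1 (by omega), ?_⟩,
        fun j hj => hblocks (p + 1) (by omega) le_rfl j hj.1 hj.2⟩
      simpa only [Nat.sub_add_cancel hp1] using hchain (p - 1) (by omega)

lemma update_mem_recordSet_succ_iff (hi : StrictAntiOn i (Iic k)) (hp : p < k) {v : ℕ → ℝ}
    {t : ℝ} : update v (i p) t ∈ recordSet i (p + 1) c ↔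
      t < c ∧ v ∈ recordSet i p t ∩ {w | ∀ j ∈ Finset.Ioo (i (p + 1)) (i p), w j < t} := by
  rw [mem_recordSet_succ_iff hi hp, update_self,
    (dependsOn_recordSet hi hp.le).apply_update_of_notMem (fun h => lt_irrefl _ h.1)]
  simp +contextual [Finset.mem_Ioo, update_of_ne (ne_of_lt _)]

lemma mem_recordSet_and_lt_iff (hi : StrictAntiOn i (Iic k)) (hk : 1 ≤ k) {v : ℕ → ℝ} {x : ℝ} :
    v ∈ recordSet i k x ∧ x < v (i k) ↔ (∀ p < k, v (i p) < v (i (p + 1))) ∧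
      (∀ p, 1 ≤ p → p ≤ k → ∀ j, i p < j → j < i (p - 1) → v j < v (i (p - 1))) ∧
      v (i (k - 1)) < x ∧ x < v (i k) := by
  rw [mem_recordSet_iff hi hk le_rfl]
  constructor
  · rintro ⟨⟨hchain, hblocks, hlast⟩, hx⟩
    refine ⟨fun q hq => ?_, hblocks, hlast, hx⟩
    rcases lt_or_eq_of_le (Nat.succ_le_of_lt hq) with hq | hq
    · exact hchain q hq
    · obtain rfl : q = k - 1 := by omega
      simpa only [Nat.sub_add_cancel hk] using hlast.trans hx
  · rintro ⟨hchain, hblocks, hlast, hx⟩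
    exact ⟨⟨fun q hq => hchain q (by omega), hblocks, hlast⟩, hx⟩

end recordSet

namespace ProbabilityTheory

section records

variable {Ω : Type*} [MeasurableSpace Ω] {μ : Measure Ω} {X : ℕ → Ω → ℝ} {i : ℕ → ℕ} {k : ℕ}

theorem iIndepFun.measure_recordSet (hmeas : ∀ j, Measurable (X j)) (hindep : iIndepFun X μ)
    (hunif : ∀ j, μ.map (X j) = volume.restrict (Icc 0 1)) (hi : StrictAntiOn i (Iic k))
    {p : ℕ} (hp : p ≤ k) {c : ℝ} (hc : c ∈ Icc 0 1) :
    μ {ω | (fun j => X j ω) ∈ recordSet i p c} =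
      (∏ q ∈ Finset.Icc 1 p, ((i 0 - i q : ℕ) : ℝ≥0∞)⁻¹) * ENNReal.ofReal (c ^ (i 0 - i p)) := by
  have := hindep.isProbabilityMeasure
  induction p generalizing c with
  | zero => simp
  | succ p ih =>
    have hstep : i (p + 1) < i p := hi (mem_Iic.2 (by omega)) (mem_Iic.2 (by omega)) (by omega)
    have htop : i p ≤ i 0 := hi.antitoneOn (by simp) (mem_Iic.2 (by omega)) (Nat.zero_le p)
    rw [hindep.measure_eq_of_update_eq_pow hmeas hunif (a := i p) (measurableSet_recordSet i _ c)
      hc (fun v hv => ((mem_recordSet_succ_iff hi hp).mp hv).1)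
      (K := ∏ q ∈ Finset.Icc 1 p, ((i 0 - i q : ℕ) : ℝ≥0∞)⁻¹)
      (e := i 0 - i p + (i p - i (p + 1) - 1)) fun t ht => ?_]
    · rw [show i 0 - i p + (i p - i (p + 1) - 1) + 1 = i 0 - i (p + 1) by omega,
        Finset.prod_Icc_succ_top (by omega), div_eq_mul_inv]
      ring
    have ht' : t ∈ Icc 0 1 := ⟨ht.1, ht.2.le.trans hc.2⟩
    have hdisj : Disjoint (Ioc (i p) (i 0)) (Finset.Ioo (i (p + 1)) (i p) : Set ℕ) := by
      rw [Finset.coe_Ioo, Set.disjoint_left]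
      exact fun j hj hj' => lt_asymm hj.1 hj'.2
    have hevent : {ω | update (fun j => X j ω) (i p) t ∈ recordSet i (p + 1) c} =
        {ω | (fun j => X j ω) ∈ recordSet i p t ∩
          {w | ∀ j ∈ Finset.Ioo (i (p + 1)) (i p), w j < t}} :=
      ext fun ω => (update_mem_recordSet_succ_iff hi hp).trans (and_iff_right ht.2)
    rw [hevent, hindep.measure_inter_eq_mul_of_dependsOn hmeas hdisj
      (R := {w | ∀ j ∈ Finset.Ioo (i (p + 1)) (i p), w j < t})
      (measurableSet_recordSet i p t) (by measurability) (dependsOn_recordSet hi (by omega))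
      (dependsOn_forall_mem _ fun _ x => x < t),
      ih (by omega) ht', hindep.measure_forall_lt hmeas hunif _ ht', Nat.card_Ioo,
      ← ENNReal.ofReal_pow ht.1, mul_assoc, ← ENNReal.ofReal_mul (pow_nonneg ht.1 _), ← pow_add]

theorem iIndepFun.measure_recordSet_and_lt (hmeas : ∀ j, Measurable (X j)) (hindep : iIndepFun X μ)
    (hunif : ∀ j, μ.map (X j) = volume.restrict (Icc 0 1)) (hi : StrictAntiOn i (Iic k))
    {n : ℕ} (hn : i 0 < n) :
    μ {ω | (fun j => X j ω) ∈ recordSet i k (X n ω) ∧ X n ω < X (i k) ω} =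
      (∏ q ∈ Finset.Icc 1 k, ((i 0 - i q : ℕ) : ℝ≥0∞)⁻¹) *
        (((i 0 - i k + 1 : ℕ) : ℝ≥0∞)⁻¹ * ((i 0 - i k + 2 : ℕ) : ℝ≥0∞)⁻¹) := by
  set P := ∏ q ∈ Finset.Icc 1 k, ((i 0 - i q : ℕ) : ℝ≥0∞)⁻¹
  set N := i 0 - i k
  have hdep (c : ℝ) := dependsOn_recordSet (c := c) hi le_rfl
  have hnk : n ≠ i k := (hn.trans_le' (hi.antitoneOn (by simp) (by simp) (Nat.zero_le k))).ne'
  have hlower (t : ℝ) : MeasurableSet {v : ℕ → ℝ | v ∈ recordSet i k (v n) ∧ v n < t} := by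
    unfold recordSet; measurability
  have hinner : ∀ t ∈ Icc (0 : ℝ) 1,
      μ {ω | (fun j => X j ω) ∈ {v | v ∈ recordSet i k (v n) ∧ v n < t}} =
        P * ((N + 1 : ℕ) : ℝ≥0∞)⁻¹ * ENNReal.ofReal (t ^ (N + 1)) := fun t ht => by
    rw [mul_right_comm, ← div_eq_mul_inv]
    exact hindep.measure_eq_of_update_eq_pow hmeas hunif (a := n) (hlower t) ht (fun v hv => hv.2)
      fun s hs => by
        have hevent : {ω | update (fun j => X j ω) n s ∈ {v | v ∈ recordSet i k (v n) ∧ v n < t}} =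
            {ω | (fun j => X j ω) ∈ recordSet i k s} := by
          ext ω
          simp [(hdep s).apply_update_of_notMem (fun h : n ∈ Ioc (i k) (i 0) => hn.not_ge h.2),
            hs.2]
        rw [hevent, hindep.measure_recordSet hmeas hunif hi le_rfl ⟨hs.1, hs.2.le.trans ht.2⟩]
  calc μ {ω | (fun j => X j ω) ∈ recordSet i k (X n ω) ∧ X n ω < X (i k) ω}
      = ∫⁻ t in Icc 0 1,
          μ {ω | update (fun j => X j ω) (i k) t ∈
            {v | v ∈ recordSet i k (v n) ∧ v n < v (i k)}} := by
        rw [← hunif, ← hindep.measure_eq_lintegral_update hmeas (i k)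
          (by unfold recordSet; measurability)]
        rfl
    _ = ∫⁻ t in Icc 0 1, P * ((N + 1 : ℕ) : ℝ≥0∞)⁻¹ * ENNReal.ofReal (t ^ (N + 1)) := by
        refine setLIntegral_congr_fun measurableSet_Icc fun t ht => ?_
        rw [← hinner t ht]
        congr 1
        ext ω
        simp [update_of_ne hnk,
          (hdep _).apply_update_of_notMem (fun h : i k ∈ Ioc (i k) (i 0) => lt_irrefl _ h.1)]
    _ = _ := by
        rw [lintegral_const_mul _ (by fun_prop), setLIntegral_congr Ico_ae_eq_Icc.symm,
          setLIntegral_Ico_pow _ zero_le_one]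
        simp only [one_pow, ENNReal.ofReal_one, one_div, Nat.add_assoc]
        ring

end records

end ProbabilityTheory

theorem stmt_13_general {Ω : Type*} [MeasurableSpace Ω] (μ : Measure Ω)
    (X : ℕ → Ω → ℝ) (hmeas : ∀ m, Measurable (X m))
    (hindep : iIndepFun X μ)
    (hunif : ∀ m, μ.map (X m) = volume.restrict (Set.Icc (0:ℝ) 1))
    (k n : ℕ) (hk : 1 ≤ k) (hn : k + 1 ≤ n)
    (i : ℕ → ℕ) (hdec : ∀ p < k, i (p + 1) < i p) (hi0 : i 0 = n - 1) :
    μ {ω | (∀ p < k, X (i p) ω < X (i (p + 1)) ω) ∧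
           (∀ p, 1 ≤ p → p ≤ k → ∀ j, i p < j → j < i (p - 1) → X j ω < X (i (p - 1)) ω) ∧
           X (i (k - 1)) ω < X n ω ∧ X n ω < X (i k) ω} =
      (∏ p ∈ Finset.Icc 1 (k - 1), (1 : ℝ≥0∞) / ((i 0 - i p : ℕ) : ℝ≥0∞)) *
        (1 / (((i 0 - i k : ℕ) : ℝ≥0∞) * ((i 0 - i k + 1 : ℕ) : ℝ≥0∞) *
          ((i 0 - i k + 2 : ℕ) : ℝ≥0∞))) := by
  have hi : StrictAntiOn i (Iic k) := strictAntiOn_Iic_of_succ_lt hdec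
  have hevent : {ω | (∀ p < k, X (i p) ω < X (i (p + 1)) ω) ∧
      (∀ p, 1 ≤ p → p ≤ k → ∀ j, i p < j → j < i (p - 1) → X j ω < X (i (p - 1)) ω) ∧
      X (i (k - 1)) ω < X n ω ∧ X n ω < X (i k) ω} =
      {ω | (fun j => X j ω) ∈ recordSet i k (X n ω) ∧ X n ω < X (i k) ω} :=
    ext fun ω => (mem_recordSet_and_lt_iff (v := fun j => X j ω) hi hk).symm
  rw [hevent, hindep.measure_recordSet_and_lt hmeas hunif hi (by omega)]
  obtain ⟨k, rfl⟩ : ∃ m, k = m + 1 := ⟨k - 1, by omega⟩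
  simp only [one_div, Nat.add_sub_cancel]
  rw [Finset.prod_Icc_succ_top (by omega), ENNReal.mul_inv (Or.inr (ENNReal.natCast_ne_top _))
    (Or.inr (by simp)), ENNReal.mul_inv (Or.inr (ENNReal.natCast_ne_top _)) (Or.inr (by simp))]
  ring

theorem stmt_13 {Ω : Type*} [MeasurableSpace Ω] (μ : Measure Ω) [IsProbabilityMeasure μ]
    (X : ℕ → Ω → ℝ) (hmeas : ∀ m, Measurable (X m))
    (hindep : iIndepFun X μ)
    (hunif : ∀ m, μ.map (X m) = volume.restrict (Set.Icc (0:ℝ) 1))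
    (k n : ℕ) (hk : 1 ≤ k) (hn : k + 1 ≤ n)
    (i : ℕ → ℕ) (hdec : ∀ p < k, i (p + 1) < i p) (hi0 : i 0 = n - 1) :
    μ {ω | (∀ p < k, X (i p) ω < X (i (p + 1)) ω) ∧
           (∀ p, 1 ≤ p → p ≤ k → ∀ j, i p < j → j < i (p - 1) → X j ω < X (i (p - 1)) ω) ∧
           X (i (k - 1)) ω < X n ω ∧ X n ω < X (i k) ω} =
      (∏ p ∈ Finset.Icc 1 (k - 1), (1 : ℝ≥0∞) / ((i 0 - i p : ℕ) : ℝ≥0∞)) *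
        (1 / (((i 0 - i k : ℕ) : ℝ≥0∞) * ((i 0 - i k + 1 : ℕ) : ℝ≥0∞) *
          ((i 0 - i k + 2 : ℕ) : ℝ≥0∞))) :=
  stmt_13_general μ X hmeas hindep hunif k n hk hn i hdec hi0
end

section
/- For fixed k ≥ 1 and i_0 = n-1, the sum over all (i_1,...,i_{k-1}) with k-p ≤ i_p ≤ i_{p-1}-1 of (∏_{p=1}^{k-1} 1/(i_0-i_p)) · 1/(2(i_0+1)(i_0+2)) is at most (1+log(n-1))^{k-1} / (2n(n+1)). -/
/-! Each level of the nested sum contributes a factor `∑_{i_p} 1/(i_0 - i_p)` whose distinct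
denominators lie in `{1, …, i_0}`, so it is at most the harmonic number `H_{i_0} ≤ 1 + log i_0`.
Peeling off the levels one at a time bounds the depth-`(k-1)` sum by `(1 + log i_0)^(k-1)`. -/

/-- The nested sum `∑_{i_p} ∏_p 1/(i0 - i_p)` over the index set
`{(i_p, …, i_{p+r-1}) : k - q ≤ i_q ≤ i_{q-1} - 1}`, computed recursively:
`nestedSum k i0 r p prev` sums over `i_p ∈ [k - p, prev - 1]` the factor
`1/(i0 - i_p)` times the remaining nested sum of depth `r - 1`. -/
noncomputable def nestedSum (k i0 : ℕ) : ℕ → ℕ → ℕ → ℝ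
  | 0, _, _ => 1
  | r + 1, p, prev =>
      ∑ ip ∈ Finset.Icc (k - p) (prev - 1),
        (1 : ℝ) / ((i0 - ip : ℕ) : ℝ) * nestedSum k i0 r (p + 1) ip

open Finset

/-- Terms with `i ≥ i0` vanish, since then `i0 - i = 0` in `ℕ` and `1 / 0 = 0` in `ℝ`. -/
lemma sum_one_div_natSub_le_harmonic (i0 : ℕ) (s : Finset ℕ) :
    ∑ i ∈ s, (1 : ℝ) / ((i0 - i : ℕ) : ℝ) ≤ harmonic i0 := by
  have h_filter : ∑ i ∈ s, (1 : ℝ) / ((i0 - i : ℕ) : ℝ)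
      = ∑ i ∈ s.filter (· < i0), (1 : ℝ) / ((i0 - i : ℕ) : ℝ) := by
    refine (sum_filter_of_ne fun i _ hi => ?_).symm
    by_contra hge
    simp [Nat.sub_eq_zero_of_le (not_lt.mp hge)] at hi
  have h_reflect : ∑ i ∈ range i0, (1 : ℝ) / ((i0 - i : ℕ) : ℝ) = harmonic i0 := by
    rw [← sum_range_reflect, harmonic, Rat.cast_sum]
    refine sum_congr rfl fun j hj => ?_
    rw [show i0 - (i0 - 1 - j) = j + 1 by have := mem_range.mp hj; omega]
    push_cast
    rw [one_div]
  rw [h_filter, ← h_reflect]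
  exact sum_le_sum_of_subset_of_nonneg (fun i hi => mem_range.mpr (mem_filter.mp hi).2)
    fun _ _ _ => by positivity

lemma sum_one_div_natSub_le_one_add_log (i0 : ℕ) (s : Finset ℕ) :
    ∑ i ∈ s, (1 : ℝ) / ((i0 - i : ℕ) : ℝ) ≤ 1 + Real.log i0 :=
  (sum_one_div_natSub_le_harmonic i0 s).trans (harmonic_le_one_add_log i0)

lemma nestedSum_le_one_add_log_pow (k i0 r p prev : ℕ) :
    nestedSum k i0 r p prev ≤ (1 + Real.log i0) ^ r := by
  induction r generalizing p prev with
  | zero => simp [nestedSum]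
  | succ r ih =>
    have h_base : 0 ≤ 1 + Real.log i0 := by linarith [Real.log_natCast_nonneg i0]
    rw [nestedSum, pow_succ']
    calc ∑ ip ∈ Icc (k - p) (prev - 1),
          (1 : ℝ) / ((i0 - ip : ℕ) : ℝ) * nestedSum k i0 r (p + 1) ip
        ≤ ∑ ip ∈ Icc (k - p) (prev - 1),
          (1 : ℝ) / ((i0 - ip : ℕ) : ℝ) * (1 + Real.log i0) ^ r :=
          sum_le_sum fun ip _ => mul_le_mul_of_nonneg_left (ih _ _) (by positivity)
      _ ≤ (1 + Real.log i0) * (1 + Real.log i0) ^ r := by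
          rw [← sum_mul]
          exact mul_le_mul_of_nonneg_right (sum_one_div_natSub_le_one_add_log i0 _)
            (pow_nonneg h_base r)

theorem stmt_14_general (k n : ℕ) :
    nestedSum k (n - 1) (k - 1) 1 (n - 1) * (1 / (2 * (n : ℝ) * (n + 1))) ≤
      (1 + Real.log ((n - 1 : ℕ) : ℝ)) ^ (k - 1) / (2 * (n : ℝ) * (n + 1)) := by
  have h_denom : (0 : ℝ) ≤ 1 / (2 * (n : ℝ) * (n + 1)) := by positivity
  exact mul_le_mul_of_nonneg_right (nestedSum_le_one_add_log_pow k (n - 1) (k - 1) 1 (n - 1))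
    h_denom |>.trans_eq (mul_one_div _ _)

theorem stmt_14 (k n : ℕ) (hk : 1 ≤ k) (hn : 2 ≤ n) :
    nestedSum k (n - 1) (k - 1) 1 (n - 1) * (1 / (2 * (n : ℝ) * (n + 1))) ≤
      (1 + Real.log ((n - 1 : ℕ) : ℝ)) ^ (k - 1) / (2 * (n : ℝ) * (n + 1)) :=
  stmt_14_general k n
end

section
/- Let X_0, X_1, ... be i.i.d. random variables with a continuous distribution, let R_m be the set of Pareto-optimal pairs (i, X_i) among i ≤ m (current records), and let B_n = |R_{n-1} \ R_n| be the number of records broken at time n. Then for every k ≥ 0, P[B_n = k] → 1/2^{k+1} as n → ∞. -/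
open MeasureTheory ProbabilityTheory Filter
open scoped ENNReal

open Finset Function Topology

lemma card_filter_Icc_one_succ (p : ℕ → Prop) [DecidablePred p] (n : ℕ) :
    #{t ∈ Icc 1 (n + 1) | p t} = #{t ∈ Icc 1 n | p t} + if p (n + 1) then 1 else 0 := by
  simp only [card_filter]
  exact sum_Icc_succ_top (by omega) _

lemma measurable_card_filter {α ι : Type*} [MeasurableSpace α] (s : Finset ι) {p : ι → α → Prop}
    [∀ i, DecidablePred (p i)] (hp : ∀ i ∈ s, MeasurableSet {a | p i a}) :
    Measurable fun a => #{i ∈ s | p i a} := by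
  simp only [card_filter]
  exact Finset.measurable_sum _ fun i hi =>
    Measurable.ite (hp i hi) measurable_const measurable_const

section Records

open scoped Classical

/-- Records are taken among `v 1, v 2, …`: the coordinate `v 0` is kept apart as a reference
value. -/
def IsRecord (v : ℕ → ℝ) (t : ℕ) : Prop := ∀ i, 0 < i → i < t → v i < v t

noncomputable def recordCount (v : ℕ → ℝ) (n : ℕ) : ℕ := #{t ∈ Icc 1 n | IsRecord v t}

noncomputable def lowRecordCount (v : ℕ → ℝ) (n : ℕ) : ℕ :=
  #{t ∈ Icc 1 n | IsRecord v t ∧ v t ≤ v 0}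

variable {v w : ℕ → ℝ} {j n t : ℕ}

@[simp] lemma recordCount_zero : recordCount v 0 = 0 := rfl

@[simp] lemma lowRecordCount_zero : lowRecordCount v 0 = 0 := rfl

lemma recordCount_succ :
    recordCount v (n + 1) = recordCount v n + if IsRecord v (n + 1) then 1 else 0 :=
  card_filter_Icc_one_succ _ n

lemma lowRecordCount_succ : lowRecordCount v (n + 1) =
    lowRecordCount v n + if IsRecord v (n + 1) ∧ v (n + 1) ≤ v 0 then 1 else 0 :=
  card_filter_Icc_one_succ _ n

lemma recordCount_mono : Monotone (recordCount v) :=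
  monotone_nat_of_le_succ fun n => by rw [recordCount_succ]; omega

lemma lowRecordCount_mono : Monotone (lowRecordCount v) :=
  monotone_nat_of_le_succ fun n => by rw [lowRecordCount_succ]; omega

lemma isRecord_congr (h : ∀ i, 0 < i → i ≤ t → v i = w i) : IsRecord v t ↔ IsRecord w t := by
  refine forall_congr' fun i => imp_congr_right fun hi => imp_congr_right fun hit => ?_
  rw [h i hi hit.le, h t (by omega) le_rfl]

lemma recordCount_congr (h : ∀ i, 0 < i → i ≤ n → v i = w i) :
    recordCount v n = recordCount w n := by
  refine congrArg card (filter_congr fun t ht => isRecord_congr fun i hi hit => h i hi ?_)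
  simp only [mem_Icc] at ht
  omega

lemma lowRecordCount_eq_recordCount (h : ∀ i, 0 < i → i ≤ n → v i ≤ v 0) :
    lowRecordCount v n = recordCount v n := by
  refine congrArg card (filter_congr fun t ht => and_iff_left_of_imp fun _ => h t ?_ ?_) <;>
  simp only [mem_Icc] at ht <;> omega

def lowRecordsAtLeast (j : ℕ) : Set (ℕ → ℝ) := ⋃ n, {v | j ≤ lowRecordCount v n}

def lowRecordAt (j t : ℕ) : Set (ℕ → ℝ) :=
  {v | recordCount v t = j ∧ IsRecord v (t + 1) ∧ v (t + 1) ≤ v 0}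

def firstExceedanceAt (j t : ℕ) : Set (ℕ → ℝ) :=
  {v | recordCount v t = j ∧ (∀ i, 0 < i → i ≤ t → v i < v 0) ∧ v 0 ≤ v (t + 1)}

lemma lowRecordCount_eq_of_mem_lowRecordAt (hv : v ∈ lowRecordAt j t) :
    lowRecordCount v t = j := by
  obtain ⟨hcount, hrec, hlow⟩ := hv
  rw [← hcount]
  exact lowRecordCount_eq_recordCount fun i hi hit => (hrec i hi (by omega)).le.trans hlow

lemma lowRecordsAtLeast_succ : lowRecordsAtLeast (j + 1) = ⋃ t, lowRecordAt j t := by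
  ext v
  simp only [lowRecordsAtLeast, Set.mem_iUnion, Set.mem_ofPred_eq]
  constructor
  · intro hex
    obtain ⟨t, ht⟩ : ∃ t, Nat.find hex = t + 1 :=
      Nat.exists_eq_add_one.2 <| Nat.pos_of_ne_zero fun h0 => by
        simpa [h0] using Nat.find_spec hex
    have hbefore : lowRecordCount v t < j + 1 := not_le.1 (Nat.find_min hex (by omega))
    have hafter := ht ▸ Nat.find_spec hex
    rw [lowRecordCount_succ] at hafter
    split_ifs at hafter with hnew
    · refine ⟨t, ?_, hnew⟩
      rw [← lowRecordCount_eq_recordCount fun i hi hit =>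
        (hnew.1 i hi (by omega)).le.trans hnew.2]
      omega
    · omega
  · rintro ⟨t, hv⟩
    refine ⟨t + 1, ?_⟩
    rw [lowRecordCount_succ, if_pos hv.2, lowRecordCount_eq_of_mem_lowRecordAt hv]

lemma pairwise_disjoint_lowRecordAt : Pairwise (Disjoint on lowRecordAt j) := by
  refine (pairwise_disjoint_on _).2 fun t t' htt' => Set.disjoint_left.2 fun v hv hv' => ?_
  have := recordCount_mono (v := v) (show t + 1 ≤ t' by omega)
  rw [recordCount_succ, if_pos hv.2.1, hv.1, hv'.1] at this
  omega

lemma pairwise_disjoint_firstExceedanceAt : Pairwise (Disjoint on firstExceedanceAt j) :=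
  (pairwise_disjoint_on _).2 fun t t' htt' => Set.disjoint_left.2 fun _ hv hv' =>
    (hv'.2.1 (t + 1) (by omega) htt').not_ge hv.2.2

lemma preimage_swap_lowRecordAt :
    (fun v => v ∘ Equiv.swap 0 (t + 1)) ⁻¹' lowRecordAt j t = firstExceedanceAt j t := by
  ext v
  have hfix : ∀ i, 0 < i → i ≤ t → v (Equiv.swap 0 (t + 1) i) = v i := fun i hi hit =>
    congrArg v (Equiv.swap_apply_of_ne_of_ne (by omega) (by omega))
  have hcount : recordCount (v ∘ Equiv.swap 0 (t + 1)) t = recordCount v t :=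
    recordCount_congr hfix
  simp only [lowRecordAt, firstExceedanceAt, Set.mem_preimage, Set.mem_ofPred_eq, hcount,
    IsRecord, Function.comp_apply, Equiv.swap_apply_left, Equiv.swap_apply_right]
  refine and_congr_right fun _ => and_congr_left fun _ => forall_congr' fun i => ?_
  refine imp_congr_right fun hi => ⟨fun h hit => ?_, fun h hit => ?_⟩
  · simpa [hfix i hi hit] using h (by omega)
  · simpa [hfix i hi (by omega)] using h (by omega)

lemma lowRecordCount_eq_recordCount_min (hbelow : ∀ i, 0 < i → i ≤ t → v i < v 0)
    (hexc : v 0 < v (t + 1)) (n : ℕ) : lowRecordCount v n = recordCount v (min n t) := by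
  induction n with
  | zero => simp
  | succ n ih =>
    rw [lowRecordCount_succ, ih]
    rcases le_or_gt (n + 1) t with hnt | htn
    · simp only [min_eq_left hnt, min_eq_left (by omega : n ≤ t), recordCount_succ,
        and_iff_left (hbelow (n + 1) (by omega) hnt).le]
    · rw [min_eq_right (by omega), min_eq_right (by omega), if_neg, add_zero]
      rintro ⟨hrec, hlow⟩
      have : v (t + 1) ≤ v (n + 1) := by
        rcases (show t + 1 ≤ n + 1 by omega).eq_or_lt with h | h
        · rw [h]
        · exact (hrec (t + 1) (by omega) h).le
      linarith

lemma mem_lowRecordsAtLeast_sdiff_iff (hties : ∀ i, v i = v 0 → i = 0)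
    (hexc : ∃ t, v 0 ≤ v (t + 1)) :
    v ∈ lowRecordsAtLeast j \ lowRecordsAtLeast (j + 1) ↔ v ∈ ⋃ t, firstExceedanceAt j t := by
  set τ := Nat.find hexc
  have hbelow : ∀ i, 0 < i → i ≤ τ → v i < v 0 := fun i hi hiτ => by
    simpa [Nat.sub_add_cancel hi] using Nat.find_min hexc (show i - 1 < τ by omega)
  have hexc' : v 0 < v (τ + 1) :=
    (Nat.find_spec hexc).lt_of_ne fun h => by simpa using hties _ h.symm
  have hcount := lowRecordCount_eq_recordCount_min hbelow hexc'
  have hmem : ∀ j, v ∈ lowRecordsAtLeast j ↔ j ≤ recordCount v τ := fun j => by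
    simp only [lowRecordsAtLeast, Set.mem_iUnion, Set.mem_ofPred_eq, hcount]
    exact ⟨fun ⟨n, hn⟩ => hn.trans (recordCount_mono (min_le_right _ _)),
      fun h => ⟨τ, by rwa [min_self]⟩⟩
  have hfirst : ∀ t, v ∈ firstExceedanceAt j t ↔ recordCount v τ = j ∧ t = τ := fun t => by
    refine ⟨fun hv => ?_, fun ⟨hj, ht⟩ => ht ▸ ⟨hj, hbelow, hexc'.le⟩⟩
    have ht : τ = t := (Nat.find_eq_iff hexc).2
      ⟨hv.2.2, fun n hn => not_le.2 (hv.2.1 (n + 1) (by omega) (by omega))⟩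
    exact ⟨ht ▸ hv.1, ht.symm⟩
  simp only [Set.mem_sdiff, hmem, Set.mem_iUnion, hfirst, exists_and_left, exists_eq, and_true]
  omega

lemma measurableSet_isRecord (t : ℕ) : MeasurableSet {v : ℕ → ℝ | IsRecord v t} := by
  unfold IsRecord
  measurability

lemma measurable_recordCount (n : ℕ) : Measurable fun v => recordCount v n :=
  measurable_card_filter _ fun t _ => measurableSet_isRecord t

lemma measurable_lowRecordCount (n : ℕ) : Measurable fun v => lowRecordCount v n :=
  measurable_card_filter _ fun t _ =>
    (measurableSet_isRecord t).inter <|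
      measurableSet_le (measurable_pi_apply t) (measurable_pi_apply 0)

lemma measurableSet_lowRecordsAtLeast (j : ℕ) : MeasurableSet (lowRecordsAtLeast j) :=
  .iUnion fun n => measurableSet_le measurable_const (measurable_lowRecordCount n)

lemma measurableSet_lowRecordAt (j t : ℕ) : MeasurableSet (lowRecordAt j t) :=
  (measurable_recordCount t (measurableSet_singleton j)).inter <|
    (measurableSet_isRecord _).inter <| measurableSet_le (measurable_pi_apply _) (measurable_pi_apply 0)

lemma measurableSet_firstExceedanceAt (j t : ℕ) : MeasurableSet (firstExceedanceAt j t) := by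
  refine (measurable_recordCount t (measurableSet_singleton j)).inter ?_
  exact measurableSet_setOfPred.2 (by fun_prop)

def reverseBelow (n : ℕ) : Equiv.Perm ℕ :=
  Function.Involutive.toPerm (fun a => if a ≤ n then n - a else a) fun a => by
    dsimp only
    split_ifs <;> omega

lemma reverseBelow_apply_of_le {n a : ℕ} (h : a ≤ n) : reverseBelow n a = n - a := if_pos h

lemma isCurrentRecord_pred_and_not_iff {Ω : Type*} (X : ℕ → Ω → ℝ) (n i : ℕ) (ω : Ω) :
    IsCurrentRecord X (n - 1) i ω ∧ ¬ IsCurrentRecord X n i ω ↔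
      i < n ∧ (∀ j, i < j → j < n → X j ω < X i ω) ∧ X i ω ≤ X n ω := by
  simp only [IsCurrentRecord, not_and, not_forall, not_lt]
  constructor
  · rintro ⟨⟨hi, hrec⟩, hbroken⟩
    obtain ⟨j, hij, hjn, hj⟩ := hbroken (by omega)
    have hjn' : j = n := by
      by_contra hne
      exact (hrec j hij (by omega)).not_ge hj
    refine ⟨by omega, fun j' h1 h2 => hrec j' h1 (by omega), hjn' ▸ hj⟩
  · rintro ⟨hin, hrec, hle⟩
    exact ⟨⟨by omega, fun j h1 h2 => hrec j h1 (by omega)⟩, fun _ => ⟨n, hin, le_rfl, hle⟩⟩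

lemma lowRecordCount_congr (h : ∀ i ≤ n, v i = w i) : lowRecordCount v n = lowRecordCount w n := by
  refine congrArg card (filter_congr fun t ht => ?_)
  simp only [mem_Icc] at ht
  rw [isRecord_congr fun i _ hit => h i (by omega), h t ht.2, h 0 (Nat.zero_le n)]

lemma isRecord_comp_sub_iff (ht : t ≤ n) :
    IsRecord (fun a => v (n - a)) t ↔ ∀ i, n - t < i → i < n → v i < v (n - t) := by
  refine ⟨fun h i h1 h2 => ?_, fun h a h1 h2 => h (n - a) (by omega) (by omega)⟩
  simpa [Nat.sub_sub_self h2.le] using h (n - i) (by omega) (by omega)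

lemma brokenCount_eq_lowRecordCount {Ω : Type*} (X : ℕ → Ω → ℝ) (n : ℕ) (ω : Ω) :
    brokenCount X n ω = lowRecordCount (fun a => X (reverseBelow n a) ω) n := by
  rw [lowRecordCount_congr (w := fun a => X (n - a) ω) fun a ha => by
    rw [reverseBelow_apply_of_le ha], brokenCount, lowRecordCount, ← Set.ncard_coe_finset]
  refine Set.ncard_congr (fun i _ => n - i) (fun i hi => ?_) (fun i i' hi hi' h => ?_)
    (fun t ht => ?_)
  all_goals simp only [Set.mem_ofPred_eq, isCurrentRecord_pred_and_not_iff, coe_filter,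
    mem_Icc] at *
  · obtain ⟨hin, hrec, hle⟩ := hi
    rw [isRecord_comp_sub_iff (v := fun a => X a ω) (Nat.sub_le n i), Nat.sub_sub_self hin.le,
      Nat.sub_zero]
    exact ⟨by omega, hrec, hle⟩
  · omega
  · obtain ⟨⟨h1, htn⟩, hrec, hle⟩ := ht
    rw [isRecord_comp_sub_iff (v := fun a => X a ω) htn] at hrec
    exact ⟨n - t, ⟨by omega, hrec, by simpa using hle⟩, Nat.sub_sub_self htn⟩

end Records

section Exchangeable

variable {P : Measure (ℕ → ℝ)} [IsProbabilityMeasure P]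

/-- The events "`v c` is the strict maximum of `v 0, …, v (m - 1)`", `c < m`, are disjoint and,
by exchangeability, each at least as likely as the one for `c = 0`. -/
lemma measure_forall_lt_apply_zero_le
    (hP : ∀ σ : Equiv.Perm ℕ, MeasurePreserving (fun v => v ∘ σ) P P) (m : ℕ) :
    P {v | ∀ i, 0 < i → i < m → v i < v 0} ≤ (m : ℝ≥0∞)⁻¹ := by
  set M : ℕ → Set (ℕ → ℝ) := fun c => {v | ∀ i < m, i ≠ c → v i < v c}
  have hM0 : {v : ℕ → ℝ | ∀ i, 0 < i → i < m → v i < v 0} = M 0 := by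
    ext v
    simp only [M, Set.mem_ofPred_eq, pos_iff_ne_zero]
    exact forall_congr' fun i => ⟨fun h him hi => h hi him, fun h hi him => h him hi⟩
  have hMmeas : ∀ c, MeasurableSet (M c) := fun c => measurableSet_setOfPred.2 (by fun_prop)
  have hswap : ∀ c < m, P (M 0) ≤ P (M c) := fun c hc => by
    rw [← (hP (Equiv.swap 0 c)).measure_preimage (hMmeas 0).nullMeasurableSet]
    refine measure_mono fun v hv i him hic => ?_
    have hσ : Equiv.swap 0 c i < m := by rw [Equiv.swap_apply_def]; split_ifs <;> omega
    simpa using hv (Equiv.swap 0 c i) hσ (by simpa [Equiv.swap_apply_eq_iff] using hic)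
  have hdisj : Set.PairwiseDisjoint ↑(range m) M := fun c hc c' hc' hne =>
    Set.disjoint_left.2 fun v hv hv' =>
      (hv c' (mem_range.1 hc') hne.symm).asymm (hv' c (mem_range.1 hc) hne)
  rw [hM0, ENNReal.le_inv_iff_mul_le, mul_comm]
  calc (m : ℝ≥0∞) * P (M 0) = ∑ c ∈ range m, P (M 0) := by simp
    _ ≤ ∑ c ∈ range m, P (M c) := sum_le_sum fun c hc => hswap c (mem_range.1 hc)
    _ = P (⋃ c ∈ range m, M c) := (measure_biUnion_finset hdisj fun c _ => hMmeas c).symm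
    _ ≤ 1 := prob_le_one

lemma ae_exists_apply_zero_le (hP : ∀ σ : Equiv.Perm ℕ, MeasurePreserving (fun v => v ∘ σ) P P) :
    ∀ᵐ v ∂P, ∃ t, v 0 ≤ v (t + 1) := by
  refine ae_iff.2 <| nonpos_iff_eq_zero.1 <|
    ge_of_tendsto' ENNReal.tendsto_inv_nat_nhds_zero fun m => ?_
  refine (measure_mono fun v hv i hi _ => ?_).trans (measure_forall_lt_apply_zero_le hP m)
  simp only [Set.mem_ofPred_eq, not_exists, not_le] at hv
  simpa [Nat.sub_add_cancel hi] using hv (i - 1)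

theorem measure_lowRecordsAtLeast_sdiff
    (hP : ∀ σ : Equiv.Perm ℕ, MeasurePreserving (fun v => v ∘ σ) P P)
    (hinj : ∀ᵐ v ∂P, Injective v) (j : ℕ) :
    P (lowRecordsAtLeast j \ lowRecordsAtLeast (j + 1)) = P (lowRecordsAtLeast (j + 1)) := by
  have hae : lowRecordsAtLeast j \ lowRecordsAtLeast (j + 1) =ᵐ[P] ⋃ t, firstExceedanceAt j t := by
    refine eventuallyEq_set.2 ?_
    filter_upwards [hinj, ae_exists_apply_zero_le hP] with v hv hexc
    exact mem_lowRecordsAtLeast_sdiff_iff (fun i h => hv h) hexc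
  calc _ = P (⋃ t, firstExceedanceAt j t) := measure_congr hae
    _ = ∑' t, P (firstExceedanceAt j t) :=
      measure_iUnion pairwise_disjoint_firstExceedanceAt (measurableSet_firstExceedanceAt j)
    _ = ∑' t, P (lowRecordAt j t) := tsum_congr fun t => by
      rw [← preimage_swap_lowRecordAt,
        (hP _).measure_preimage (measurableSet_lowRecordAt j t).nullMeasurableSet]
    _ = P (lowRecordsAtLeast (j + 1)) := by
      rw [lowRecordsAtLeast_succ,
        measure_iUnion pairwise_disjoint_lowRecordAt (measurableSet_lowRecordAt j)]

theorem measure_lowRecordsAtLeast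
    (hP : ∀ σ : Equiv.Perm ℕ, MeasurePreserving (fun v => v ∘ σ) P P)
    (hinj : ∀ᵐ v ∂P, Injective v) (j : ℕ) : P (lowRecordsAtLeast j) = 2⁻¹ ^ j := by
  induction j with
  | zero => simp [lowRecordsAtLeast, Set.iUnion_const]
  | succ j ih =>
    have hsub : lowRecordsAtLeast (j + 1) ⊆ lowRecordsAtLeast j :=
      Set.iUnion_mono fun n v hv => (Nat.le_succ j).trans hv
    have htwice : 2 * P (lowRecordsAtLeast (j + 1)) = 2⁻¹ ^ j := by
      rw [two_mul, ← ih]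
      nth_rw 2 [← measure_lowRecordsAtLeast_sdiff hP hinj j]
      rw [measure_add_sdiff (measurableSet_lowRecordsAtLeast _).nullMeasurableSet,
        Set.union_eq_right.2 hsub]
    rw [pow_succ', ← htwice, ENNReal.inv_mul_cancel_left two_ne_zero ENNReal.ofNat_ne_top]

theorem tendsto_measure_lowRecordCount_eq
    (hP : ∀ σ : Equiv.Perm ℕ, MeasurePreserving (fun v => v ∘ σ) P P)
    (hinj : ∀ᵐ v ∂P, Injective v) (k : ℕ) :
    Tendsto (fun n => P {v | lowRecordCount v n = k}) atTop (𝓝 (1 / 2 ^ (k + 1))) := by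
  have hlim : ∀ j, Tendsto (fun n => P {v | j ≤ lowRecordCount v n}) atTop (𝓝 (2⁻¹ ^ j)) :=
    fun j => measure_lowRecordsAtLeast hP hinj j ▸
      tendsto_measure_iUnion_atTop fun n n' h v hv => hv.trans (lowRecordCount_mono h)
  have hsdiff : ∀ n, P {v | lowRecordCount v n = k} =
      P {v | k ≤ lowRecordCount v n} - P {v | k + 1 ≤ lowRecordCount v n} := fun n => by
    have hset : {v | lowRecordCount v n = k} =
        {v | k ≤ lowRecordCount v n} \ {v | k + 1 ≤ lowRecordCount v n} := by
      ext v
      simp only [Set.mem_ofPred_eq, Set.mem_sdiff]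
      omega
    rw [hset]
    exact measure_sdiff (Set.ofPred_subset_ofPred.2 fun v hv => (Nat.le_succ k).trans hv)
      (measurable_lowRecordCount n measurableSet_Ici).nullMeasurableSet (measure_ne_top _ _)
  have hvalue : (2⁻¹ : ℝ≥0∞) ^ k - 2⁻¹ ^ (k + 1) = 1 / 2 ^ (k + 1) := by
    rw [one_div, ENNReal.inv_pow]
    refine ENNReal.sub_eq_of_eq_add (by simp) ?_
    rw [← two_mul, pow_succ', ← mul_assoc, ENNReal.mul_inv_cancel two_ne_zero ENNReal.ofNat_ne_top,
      one_mul]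
  simpa only [hsdiff, hvalue] using ENNReal.Tendsto.sub (hlim k) (hlim (k + 1)) (Or.inl (by simp))

end Exchangeable

section Product

variable {α ι : Type*} [MeasurableSpace α] (ν : Measure α) [IsProbabilityMeasure ν]

lemma measurePreserving_comp_perm_infinitePi (σ : Equiv.Perm ι) :
    MeasurePreserving (fun v : ι → α => v ∘ σ) (Measure.infinitePi fun _ => ν)
      (Measure.infinitePi fun _ => ν) := by
  refine ⟨by fun_prop, ?_⟩
  convert Measure.infinitePi_map_piCongrLeft (fun _ : ι => ν) σ.symm using 2
  ext v i
  simp [MeasurableEquiv.piCongrLeft, Equiv.piCongrLeft]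

lemma measure_apply_eq_apply_infinitePi [MeasurableEq α] [NullSingletonClass ν] {a b : ι}
    (hab : a ≠ b) :
    Measure.infinitePi (fun _ => ν) {v | v a = v b} = 0 := by
  have hindep : IndepFun (fun v : ι → α => v a) (fun v => v b) (Measure.infinitePi fun _ => ν) :=
    (iIndepFun_infinitePi (X := fun _ => id) fun _ => measurable_id).indepFun hab
  have hlaw := (indepFun_iff_map_prod_eq_prod_map_map (measurable_pi_apply a).aemeasurable
    (measurable_pi_apply b).aemeasurable).1 hindep
  rw [Measure.infinitePi_map_eval, Measure.infinitePi_map_eval] at hlaw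
  have hdiag : {v : ι → α | v a = v b} = (fun v => (v a, v b)) ⁻¹' Set.diagonal α := rfl
  rw [hdiag, ← Measure.map_apply (by fun_prop) measurableSet_diagonal, hlaw,
    Measure.prod_apply measurableSet_diagonal]
  simp [Set.preimage, Set.diagonal]

lemma ae_injective_infinitePi [MeasurableEq α] [NullSingletonClass ν] [Countable ι] :
    ∀ᵐ v ∂Measure.infinitePi (fun _ : ι => ν), Injective v := by
  have hpair : ∀ a b : ι, ∀ᵐ v ∂Measure.infinitePi (fun _ => ν), v a = v b → a = b :=
    fun a b => by
      rcases eq_or_ne a b with rfl | hab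
      · exact ae_of_all _ fun _ _ => rfl
      · exact measure_mono_null (fun v hv => (Classical.not_imp.1 hv).1)
          (measure_apply_eq_apply_infinitePi ν hab)
  simpa only [Injective, ae_all_iff] using hpair

end Product

theorem stmt_16 {Ω : Type*} [MeasurableSpace Ω] (μ : Measure Ω) [IsProbabilityMeasure μ]
    (X : ℕ → Ω → ℝ) (hmeas : ∀ i, Measurable (X i))
    (hindep : iIndepFun X μ)
    (hident : ∀ i, μ.map (X i) = μ.map (X 0))
    (hcont : ∀ x : ℝ, μ.map (X 0) {x} = 0)
    (k : ℕ) :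
    Tendsto (fun n => μ {ω | brokenCount X n ω = k}) atTop
      (nhds (1 / 2 ^ (k + 1))) := by
  set ν := μ.map (X 0)
  have : IsProbabilityMeasure ν := Measure.isProbabilityMeasure_map (hmeas 0).aemeasurable
  have : NullSingletonClass ν := ⟨hcont⟩
  have hX : Measurable fun ω a => X a ω := measurable_pi_lambda _ hmeas
  have hlaw : μ.map (fun ω a => X a ω) = Measure.infinitePi fun _ => ν := by
    rw [hindep.map_fun_eq_infinitePi_map hmeas]
    exact congrArg _ (funext hident)
  have hbroken : ∀ n, μ {ω | brokenCount X n ω = k} =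
      Measure.infinitePi (fun _ => ν) {v | lowRecordCount v n = k} := fun n => by
    have hS : MeasurableSet {v | lowRecordCount v n = k} :=
      measurable_lowRecordCount n (measurableSet_singleton k)
    have hσ := measurePreserving_comp_perm_infinitePi ν (reverseBelow n)
    rw [← hσ.measure_preimage hS.nullMeasurableSet, ← hlaw, Measure.map_apply hX (hσ.measurable hS)]
    simp only [brokenCount_eq_lowRecordCount]
    rfl
  simpa only [hbroken] using tendsto_measure_lowRecordCount_eq
    (measurePreserving_comp_perm_infinitePi ν) (ae_injective_infinitePi ν) k
end
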